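/- arXiv:1810.07358 — 3 statements merged into one kernel-verified Lean document; each statement's English description precedes it below -/
import Mathlib

section
/- The set A = {2, 4, 5, 9, 11, 13, 14, 16, 17, 19, 20, 21, 22, 23, 24, 25, 26, 28, 30, 31, 33, 34, 36, 37, 38, 40, 41, 42, 43, 44, 46, 47, 49, 52, 55, 56, 57, 61, 65, 66, 69, 70, 71, 72, 73, 76, 77, 80, 82, 83, 85, 86, 87, 88, 89, 92, 95, 96, 97, 99} is an MSTD set, i.e. |A+A| > |A-A|. -/
/-!
Every element of `A` lies in `[2, 99]`, so `A - A ⊆ [-97, 97]`, an interval of 195 integers;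
moreover no two elements of `A` differ by `89` or `96`, so the four differences `±89, ±96` are
missing and `|A - A| ≤ 191`. On the other side, already `A + C` for the nine-element subset
`C = {2, 4, 5, 9, 20, 70, 95, 97, 99}` of `A` has 192 elements, so `|A + A| ≥ 192`.
-/

open Pointwise Finset

namespace Finset

theorem sub_self_subset_Icc {A : Finset ℤ} {a b : ℤ} (hA : A ⊆ Icc a b) :
    A - A ⊆ Icc (a - b) (b - a) := by
  intro d hd
  obtain ⟨x, hx, y, hy, rfl⟩ := mem_sub.mp hd
  have hx' := mem_Icc.mp (hA hx)
  have hy' := mem_Icc.mp (hA hy)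
  exact mem_Icc.mpr ⟨by omega, by omega⟩

theorem notMem_sub_self_iff {A : Finset ℤ} {d : ℤ} : d ∉ A - A ↔ ∀ x ∈ A, x + d ∉ A := by
  simp only [mem_sub, not_exists, not_and]
  constructor
  · intro h x hx hxd
    exact h (x + d) hxd x hx (by ring)
  · rintro h y hy x hx rfl
    exact h x hx (by simpa using hy)

theorem card_sub_self_le_card_Icc_sdiff {A M : Finset ℤ} {a b : ℤ} (hA : A ⊆ Icc a b)
    (hM : ∀ d ∈ M, ∀ x ∈ A, x + d ∉ A) :
    #(A - A) ≤ #(Icc (a - b) (b - a) \ M) := by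
  refine card_le_card fun d hd => mem_sdiff.mpr ⟨sub_self_subset_Icc hA hd, fun hdM => ?_⟩
  exact notMem_sub_self_iff.mpr (hM d hdM) hd

end Finset

set_option maxRecDepth 10000 in
theorem stmt_2 :
    let A : Finset ℤ := {2, 4, 5, 9, 11, 13, 14, 16, 17, 19, 20, 21, 22, 23, 24, 25, 26, 28, 30, 31, 33, 34, 36, 37, 38, 40, 41, 42, 43, 44, 46, 47, 49, 52, 55, 56, 57, 61, 65, 66, 69, 70, 71, 72, 73, 76, 77, 80, 82, 83, 85, 86, 87, 88, 89, 92, 95, 96, 97, 99}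
    (A + A).card > (A - A).card := by
  intro A
  have hdiff : #(A - A) ≤ 191 := calc
    #(A - A) ≤ #(Icc (2 - 99) (99 - 2) \ {-96, -89, 89, 96}) :=
      card_sub_self_le_card_Icc_sdiff (by decide) (by decide)
    _ = 191 := by decide
  have hsum : 192 ≤ #(A + A) := calc
    192 = #(A + {2, 4, 5, 9, 20, 70, 95, 97, 99}) := by decide
    _ ≤ #(A + A) := card_le_card (add_subset_add_left (by decide))
  omega
end

section
/- The set A = {0, 1, 3, 7, 9, 10, 13, 14, 16, 17, 18, 19, 22, 23, 24, 25, 26, 27, 28, 29, 30, 31, 32, 34, 35, 38, 39, 40, 41, 42, 43, 45, 46, 47, 48, 49, 54, 55, 56, 57, 58, 59, 60, 61, 64, 65, 67, 68, 69, 70, 71, 73, 75, 76, 78, 79, 80, 81, 82, 83, 85, 87, 89, 90, 91, 92, 95, 97, 98, 99}, which has cardinality 70, is an MSTD set, i.e. |A+A| > |A-A|. -/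
/-!
Inside `[0, 198]` the sumset `A + A` misses only `5`, so `|A + A| = 198`, while inside
`[-99, 99]` the difference set misses `93` and, by symmetry, `-93`, so `|A - A| ≤ 197`.
-/

open Pointwise Finset

theorem card_sub_le_of_forall_add_notMem {A : Finset ℤ} {n d : ℤ} (hA : A ⊆ Icc 0 n)
    (hd : 0 < d) (hdn : d ≤ n) (hgap : ∀ a ∈ A, a + d ∉ A) :
    ((A - A).card : ℤ) ≤ 2 * n - 1 := by
  have hsub : A - A ⊆ ((Icc (-n) n).erase d).erase (-d) := by
    rintro _ hx
    obtain ⟨a, ha, b, hb, rfl⟩ := mem_sub.1 hx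
    have ha' := mem_Icc.1 (hA ha)
    have hb' := mem_Icc.1 (hA hb)
    have hab : a - b ≠ d := fun h => hgap b hb (by rwa [← h, add_sub_cancel])
    have hba : a - b ≠ -d := fun h => hgap a ha (by rwa [show a + d = b by linarith])
    simp only [mem_erase, mem_Icc]
    omega
  calc ((A - A).card : ℤ) ≤ (((Icc (-n) n).erase d).erase (-d)).card := by
        exact_mod_cast card_le_card hsub
    _ = 2 * n - 1 := by
      rw [card_erase_of_mem (by simp only [mem_erase, mem_Icc]; omega),
        card_erase_of_mem (by simp only [mem_Icc]; omega), Int.card_Icc]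
      omega

theorem le_card_of_Icc_erase_subset {S : Finset ℤ} {n m : ℤ} (hm : m ∈ Icc 0 n)
    (h : (Icc 0 n).erase m ⊆ S) : n ≤ S.card := by
  have hcard := card_le_card h
  rw [card_erase_of_mem hm, Int.card_Icc] at hcard
  omega

def mstdExample : Finset ℤ :=
  {0, 1, 3, 7, 9, 10, 13, 14, 16, 17, 18, 19, 22, 23, 24, 25, 26, 27, 28, 29, 30, 31, 32, 34, 35,
    38, 39, 40, 41, 42, 43, 45, 46, 47, 48, 49, 54, 55, 56, 57, 58, 59, 60, 61, 64, 65, 67, 68, 69,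
    70, 71, 73, 75, 76, 78, 79, 80, 81, 82, 83, 85, 87, 89, 90, 91, 92, 95, 97, 98, 99}

set_option maxRecDepth 100000

theorem mstdExample_card : mstdExample.card = 70 := by
  decide +kernel

theorem mstdExample_subset_Icc : mstdExample ⊆ Icc 0 99 := by
  decide +kernel

theorem mstdExample_add_93_notMem : ∀ a ∈ mstdExample, a + 93 ∉ mstdExample := by
  decide +kernel

theorem Icc_erase_5_subset_mstdExample_add :
    (Icc 0 198).erase 5 ⊆ mstdExample + mstdExample := by
  -- The translates of `mstdExample` by eight of its elements already cover these sums,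
  -- which keeps the kernel search small.
  have hcover : ∀ s ∈ Icc (0 : ℤ) 198, s ≠ 5 →
      ∃ t ∈ ({0, 1, 3, 23, 85, 95, 97, 99} : Finset ℤ), s - t ∈ mstdExample := by
    decide +kernel
  have htrans : ({0, 1, 3, 23, 85, 95, 97, 99} : Finset ℤ) ⊆ mstdExample := by
    decide +kernel
  intro s hs
  obtain ⟨t, ht, hst⟩ := hcover s (mem_of_mem_erase hs) (ne_of_mem_erase hs)
  exact mem_add.2 ⟨s - t, hst, t, htrans ht, sub_add_cancel s t⟩

theorem stmt_3 :
    let A : Finset ℤ := {0, 1, 3, 7, 9, 10, 13, 14, 16, 17, 18, 19, 22, 23, 24, 25, 26, 27, 28, 29, 30, 31, 32, 34, 35, 38, 39, 40, 41, 42, 43, 45, 46, 47, 48, 49, 54, 55, 56, 57, 58, 59, 60, 61, 64, 65, 67, 68, 69, 70, 71, 73, 75, 76, 78, 79, 80, 81, 82, 83, 85, 87, 89, 90, 91, 92, 95, 97, 98, 99}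
    A.card = 70 ∧ (A + A).card > (A - A).card := by
  intro A
  have hA : A = mstdExample := rfl
  rw [hA]
  have hsums : 198 ≤ ((mstdExample + mstdExample).card : ℤ) :=
    le_card_of_Icc_erase_subset (by norm_num) Icc_erase_5_subset_mstdExample_add
  have hdiffs : ((mstdExample - mstdExample).card : ℤ) ≤ 2 * 99 - 1 :=
    card_sub_le_of_forall_add_notMem mstdExample_subset_Icc (by norm_num) (by norm_num)
      mstdExample_add_93_notMem
  exact ⟨mstdExample_card, by omega⟩
end

section
/- The set A = {2, 3, 4, 7, 9, 10, 11, 12, 13, 14, 15, 16, 17, 18, 19, 20, 21, 22, 23, 24, 25, 26, 27, 28, 30, 33, 34, 35, 36, 39, 40, 42, 43, 44, 45, 46, 47, 48, 50, 51, 52, 54, 55, 56, 57, 58, 59, 60, 61, 62, 64, 65, 67, 68, 69, 70, 71, 72, 73, 74, 75, 76, 77, 78, 79, 80, 81, 82, 83, 84, 85, 86, 87, 88, 89, 90, 91, 92, 93, 94, 95, 97, 98, 99, 101, 102, 103, 104, 107, 109, 110, 111, 112, 113, 114, 116, 119, 120, 121, 122, 123, 125, 126, 127, 128, 129, 130, 131,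 132, 135, 136, 137, 141, 142, 144}, which has cardinality 115, is an MSTD set, i.e. |A+A| > |A-A|. -/
/-!
`A` lies in `[2, 144]` and no two of its elements are `136` apart (below `9` it has only
`2, 3, 4, 7`, above `137` only `141, 142, 144`), so `A - A` misses `±136` in `[-142, 142]` and
has at most `283` elements. Consecutive elements of `A` are at most `4` apart, so adding to `A`
either of its runs `[9, 28]` and `[125, 132]` fills a whole interval: `[11, 276] ⊆ A + A`. Short
runs at both ends supply `[4, 10]` and `[277, 286]`, and `288 = 144 + 144`: `284` sums.
-/

open Pointwise Finset

set_option maxRecDepth 100000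

theorem Icc_subset_add_Icc_of_gap_le {s : Finset ℤ} {m M c d g : ℤ} (hm : m ∈ s)
    (hgap : ∀ x ∈ s, x < M → ∃ y ∈ s, x < y ∧ y ≤ x + g) (hg : g ≤ d - c + 1) :
    Icc (m + c) (M + d) ⊆ s + Icc c d := by
  intro n hn
  rw [mem_Icc] at hn
  -- the largest `x ∈ s` with `x + c ≤ n` works
  obtain ⟨x, hx, hx_max⟩ := (s.filter (· + c ≤ n)).exists_max_image id
    ⟨m, mem_filter.2 ⟨hm, hn.1⟩⟩
  rw [mem_filter] at hx
  have hnx : n ≤ x + d := by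
    rcases lt_or_ge x M with hxM | hMx
    · obtain ⟨y, hy, hxy, hyx⟩ := hgap x hx.1 hxM
      have : ¬ y + c ≤ n := fun hyn => (hx_max y (mem_filter.2 ⟨hy, hyn⟩)).not_gt hxy
      omega
    · omega
  exact mem_add.2 ⟨x, hx.1, n - x, mem_Icc.2 ⟨by omega, by omega⟩, by ring⟩

theorem Icc_add_Icc_subset_add {s t : Finset ℤ} {a b c d : ℤ} (hab : a ≤ b) (hcd : c ≤ d)
    (hs : Icc a b ⊆ s) (ht : Icc c d ⊆ t) : Icc (a + c) (b + d) ⊆ s + t := by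
  have hrun : ∀ x ∈ Icc a b, x < b → ∃ y ∈ Icc a b, x < y ∧ y ≤ x + 1 := fun x hx hxb =>
    ⟨x + 1, by rw [mem_Icc] at hx ⊢; omega, by omega, le_rfl⟩
  exact (Icc_subset_add_Icc_of_gap_le (mem_Icc.2 ⟨le_rfl, hab⟩) hrun (by omega)).trans
    (add_subset_add hs ht)

theorem sub_self_subset_erase_of_add_notMem {s : Finset ℤ} {m M k : ℤ} (hs : s ⊆ Icc m M)
    (hk : ∀ x ∈ s, x + k ∉ s) : s - s ⊆ ((Icc (m - M) (M - m)).erase k).erase (-k) := by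
  rintro _ hz
  obtain ⟨x, hx, y, hy, rfl⟩ := mem_sub.1 hz
  have hxy : x - y ≠ k := fun h => hk y hy (by rwa [show y + k = x by omega])
  have hyx : x - y ≠ -k := fun h => hk x hx (by rwa [show x + k = y by omega])
  have hx' := mem_Icc.1 (hs hx)
  have hy' := mem_Icc.1 (hs hy)
  simp only [mem_erase, mem_Icc]
  omega

theorem stmt_12 :
    let A : Finset ℤ := {2, 3, 4, 7, 9, 10, 11, 12, 13, 14, 15, 16, 17, 18, 19, 20, 21, 22, 23, 24, 25, 26, 27, 28, 30, 33, 34, 35, 36, 39, 40, 42, 43, 44, 45, 46, 47, 48, 50, 51, 52, 54, 55, 56, 57, 58, 59, 60, 61, 62, 64, 65, 67, 68, 69, 70, 71, 72, 73, 74, 75, 76, 77, 78, 79, 80, 81, 82, 83, 84, 85, 86, 87, 88, 89, 90, 91, 92, 93, 94, 95, 97, 98, 99, 101, 102, 103, 104, 107, 109, 110, 111, 112, 113, 114, 116, 119, 120, 121, 122, 123, 125, 126, 127, 128, 129, 130, 131, 132, 135, 136, 137, 141, 142, 144}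
    A.card = 115 ∧ (A + A).card > (A - A).card := by
  intro A
  have gaps : ∀ x ∈ A, x < 144 → ∃ y ∈ A, x < y ∧ y ≤ x + 4 := by decide
  have pair (a b c d : ℤ) (h : a ≤ b ∧ c ≤ d ∧ Icc a b ⊆ A ∧ Icc c d ⊆ A) :
      Icc (a + c) (b + d) ⊆ A + A :=
    Icc_add_Icc_subset_add h.1 h.2.1 h.2.2.1 h.2.2.2
  have run (a b : ℤ) (h : a + 3 ≤ b ∧ Icc a b ⊆ A) : Icc (2 + a) (144 + b) ⊆ A + A :=
    (Icc_subset_add_Icc_of_gap_le (by decide) gaps (by omega)).trans (add_subset_add_left h.2)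
  have sums : insert 288 (Icc 4 286) ⊆ A + A := by
    refine insert_subset (mem_add.2 ⟨144, by decide, 144, by decide, rfl⟩) fun n hn => ?_
    obtain h | h | h | h | h | h | h | h : n ∈ Icc 4 8 ∨ n ∈ Icc 9 11 ∨ n ∈ Icc 11 172 ∨
        n ∈ Icc 127 276 ∨ n ∈ Icc 276 279 ∨ n ∈ Icc 279 281 ∨ n ∈ Icc 282 284 ∨
        n ∈ Icc 285 286 := by
      simp only [mem_Icc] at hn ⊢; omega
    exacts [pair 2 4 2 4 (by decide) h, pair 2 4 7 7 (by decide) h, run 9 28 (by decide) h,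
      run 125 132 (by decide) h, pair 135 137 141 142 (by decide) h,
      pair 135 137 144 144 (by decide) h, pair 141 142 141 142 (by decide) h,
      pair 141 142 144 144 (by decide) h]
  have diffs : A - A ⊆ ((Icc (-142) 142).erase 136).erase (-136) :=
    sub_self_subset_erase_of_add_notMem (m := 2) (M := 144) (by decide) (by decide)
  refine ⟨by decide, ?_⟩
  calc (A - A).card ≤ (((Icc (-142 : ℤ) 142).erase 136).erase (-136)).card := card_le_card diffs
    _ < (insert 288 (Icc 4 286) : Finset ℤ).card := by
      rw [card_erase_of_mem (by simp), card_erase_of_mem (by simp), Int.card_Icc,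
        card_insert_of_notMem (by simp), Int.card_Icc]
      decide
    _ ≤ (A + A).card := card_le_card sums
end
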